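/- arXiv:1408.1178 — 5 statements merged into one kernel-verified Lean document; each statement's English description precedes it below -/
import Mathlib

section
/- (Equidivisibility of tensor products of unit vectors.) Let n ≥ 2, let x be a unit vector in V_{n,m}, y a unit vector in V_{n,l}, and assume m > l. (a) If w is a unit vector in V_{n,k}, z is a unit vector in V_{n,m+k−l}, and x ⊗ w = y ⊗ z, then there exists a unit vector x' ∈ V_{n,m−l} such that x = y ⊗ x'. (b) If w is a unit vector in V_{n,k}, z is a unit vector in V_{n,m+k−l}, and w ⊗ x = z ⊗ y, then there exists a unit vector x'' ∈ V_{n,m−l} such that x = x'' ⊗ y. -/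
noncomputable section

/-- `Vnm n m` is the Hilbert space `ℓ²({1,…,n}^m)`, identified with `(ℂ^n)^{⊗m}`. -/
abbrev Vnm (n m : ℕ) : Type := EuclideanSpace ℂ (Fin m → Fin n)

/-- The tensor product `x ⊗ y`, via `(x ⊗ y)_{JK} = x_J y_K`. -/
def tensV {n m l : ℕ} (x : Vnm n m) (y : Vnm n l) : Vnm n (m + l) :=
  WithLp.toLp 2 fun J => x (fun i => J (Fin.castAdd l i)) * y (fun i => J (Fin.natAdd m i))

/-- Re-indexing of a tensor along an equality of lengths. -/
def castV {n m m' : ℕ} (h : m = m') (z : Vnm n m) : Vnm n m' :=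
  WithLp.toLp 2 fun J => z (fun i => J (Fin.cast h i))

/-- The tensor power `x^{⊗p}`. -/
def tpowV {n m : ℕ} (x : Vnm n m) (p : ℕ) : Vnm n (p * m) :=
  WithLp.toLp 2 fun J => ∏ i : Fin p, x (fun t => J ⟨(i : ℕ) * m + (t : ℕ), by
    have h2 : (t : ℕ) < m := t.isLt
    have h1 : (i : ℕ) + 1 ≤ p := i.isLt
    have h3 : ((i : ℕ) + 1) * m = (i : ℕ) * m + m := by ring
    have h4 : ((i : ℕ) + 1) * m ≤ p * m := Nat.mul_le_mul_right m h1
    omega⟩)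

/-- The coordinatewise complex conjugate. -/
def conjV {n m : ℕ} (z : Vnm n m) : Vnm n m := WithLp.toLp 2 fun J => starRingEnd ℂ (z J)

/-- A unit vector `z` is periodic if `z = x^{⊗p}` for some unit vector `x` and `p ≥ 2`;
it is nonperiodic if it is not periodic. -/
def PeriodicV {n m : ℕ} (z : Vnm n m) : Prop :=
  ∃ (m' p : ℕ) (x : Vnm n m') (h : p * m' = m),
    ‖x‖ = 1 ∧ 2 ≤ p ∧ castV h (tpowV x p) = z

/-- The matricization of `z ∈ V_{n,b+a}` as an operator `V_{n,a} → V_{n,b}`,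
`(T z) e_K = Σ_{|J|=b} z_{JK} e_J`. -/
def matT {n b a : ℕ} (z : Vnm n (b + a)) :
    EuclideanSpace ℂ (Fin a → Fin n) →L[ℂ] EuclideanSpace ℂ (Fin b → Fin n) :=
  LinearMap.toContinuousLinearMap
    (Matrix.toEuclideanLin
      (Matrix.of fun (J : Fin b → Fin n) (K : Fin a → Fin n) => z (Fin.append J K)))

/-- The matricization `T_a(z) : V_{n,a} → V_{n,m-a}` of `z ∈ V_{n,m}`,
`T_a(z) e_K = Σ_{|J|=m−a} z_{JK} e_J`. -/
def Tmat {n m : ℕ} (a : ℕ) (h : a ≤ m) (z : Vnm n m) :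
    EuclideanSpace ℂ (Fin a → Fin n) →L[ℂ] EuclideanSpace ℂ (Fin (m - a) → Fin n) :=
  matT (castV (by omega : m = (m - a) + a) z)

/-- `z` is indecomposable if it is not a tensor product of lower-degree tensors. -/
def IndecomposableV {n m : ℕ} (z : Vnm n m) : Prop :=
  1 ≤ m ∧ ¬ ∃ (a b : ℕ) (h : a + b = m) (x : Vnm n a) (y : Vnm n b),
    1 ≤ a ∧ 1 ≤ b ∧ castV h (tensV x y) = z

/-- The iterated tensor product `x₁ ⊗ ⋯ ⊗ x_l` of homogeneous tensors of degrees `ms i`. -/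
def bigTensV {n l : ℕ} (ms : Fin l → ℕ) (xs : ∀ i, Vnm n (ms i)) : Vnm n (∑ i, ms i) :=
  WithLp.toLp 2 fun J => ∏ i : Fin l, xs i (fun t => J ⟨(∑ j ∈ Finset.Iio i, ms j) + (t : ℕ), by
    have h1 : (∑ j ∈ Finset.Iio i, ms j) + ms i ≤ ∑ j, ms j := by
      calc (∑ j ∈ Finset.Iio i, ms j) + ms i
          = ∑ j ∈ insert i (Finset.Iio i), ms j := by
            rw [Finset.sum_insert (by simp)]; ring
        _ ≤ ∑ j, ms j := Finset.sum_le_sum_of_subset (Finset.subset_univ _)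
    have h2 : (t : ℕ) < ms i := t.isLt
    omega⟩)

/-- `z ⊠ y ∈ V_{nn',m}`: `(z ⊠ y)_L = z_J y_K` where `L = J ⊠ K` is given by the
pairing `l_t = n'·j_t + k_t` of `{0,…,n−1}×{0,…,n'−1}` with `{0,…,nn'−1}`. -/
def boxTensV {n n' m : ℕ} (z : Vnm n m) (y : Vnm n' m) : Vnm (n * n') m :=
  WithLp.toLp 2 fun L =>
    z (fun t => ⟨(L t : ℕ) / n', by
        have h := (L t).isLt
        have hn' : 0 < n' := Nat.pos_of_ne_zero (by rintro rfl; simp at h)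
        exact (Nat.div_lt_iff_lt_mul hn').mpr h⟩) *
    y (fun t => ⟨(L t : ℕ) % n', by
        have h := (L t).isLt
        have hn' : 0 < n' := Nat.pos_of_ne_zero (by rintro rfl; simp at h)
        exact Nat.mod_lt _ hn'⟩)

/-- `z * y := z^{⊗α} ⊠ y^{⊗β} ∈ V_{nn',d}` where `d = αm = βl` is the lcm of `m` and `l`. -/
def starV {n n' m l : ℕ} (z : Vnm n m) (y : Vnm n' l) : Vnm (n * n') (Nat.lcm m l) :=
  boxTensV (castV (Nat.div_mul_cancel (Nat.dvd_lcm_left m l)) (tpowV z (Nat.lcm m l / m)))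
    (castV (Nat.div_mul_cancel (Nat.dvd_lcm_right m l)) (tpowV y (Nat.lcm m l / l)))

/-- Conjugacy of homogeneous tensors: `z = y`, or `z = x₁ ⊗ x₂` and `y = x₂ ⊗ x₁`
for some unit vectors `x₁, x₂`. -/
def ConjVec {n m l : ℕ} (z : Vnm n m) (y : Vnm n l) : Prop :=
  (∃ h : m = l, castV h z = y) ∨
    ∃ (a b : ℕ) (x₁ : Vnm n a) (x₂ : Vnm n b) (h₁ : a + b = m) (h₂ : b + a = l),
      ‖x₁‖ = 1 ∧ ‖x₂‖ = 1 ∧ castV h₁ (tensV x₁ x₂) = z ∧ castV h₂ (tensV x₂ x₁) = y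

/-- A Cuntz family of order `n` on `H`: `Sᵢ* Sⱼ = δᵢⱼ 1` and `Σᵢ Sᵢ Sᵢ* = 1`. -/
def IsCuntzFamily {H : Type*} [NormedAddCommGroup H] [InnerProductSpace ℂ H]
    [CompleteSpace H] {n : ℕ} (S : Fin n → H →L[ℂ] H) : Prop :=
  (∀ i j, (ContinuousLinearMap.adjoint (S i)).comp (S j) = if i = j then 1 else 0) ∧
    ∑ i, (S i).comp (ContinuousLinearMap.adjoint (S i)) = 1

/-- `S_J := S_{j₁} ∘ ⋯ ∘ S_{j_k}` for a word `J = (j₁,…,j_k)`, with `S_∅ = 1`. -/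
def Sword {H : Type*} [NormedAddCommGroup H] [InnerProductSpace ℂ H]
    {ι : Type*} (S : ι → H →L[ℂ] H) : (k : ℕ) → (Fin k → ι) → (H →L[ℂ] H)
  | 0, _ => 1
  | (k + 1), J => (S (J 0)).comp (Sword S k (fun i => J i.succ))

/-- `s(z) := Σ_{|J|=m} z_J S_J`. -/
def sop {H : Type*} [NormedAddCommGroup H] [InnerProductSpace ℂ H]
    {n m : ℕ} (S : Fin n → H →L[ℂ] H) (z : Vnm n m) : H →L[ℂ] H :=
  ∑ J : Fin m → Fin n, z J • Sword S m J


/-! Choose an index `K` with `w K ≠ 0`. Comparing the coefficients of `x ⊗ w = y ⊗ z` at the index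
`(I, J, K)` gives `x_{IJ} w_K = y_I z_{JK}`, so `x = y ⊗ x'` with `x'_J = z_{JK} / w_K`; as the norm
is multiplicative on tensor products, `x'` is a unit vector together with `x` and `y`.
Part (b) is the mirror image. -/

section

variable {n : ℕ}

@[simp]
lemma castV_rfl {m : ℕ} (h : m = m) (z : Vnm n m) : castV h z = z := rfl

@[simp]
lemma tensV_append {m l : ℕ} (x : Vnm n m) (y : Vnm n l) (I : Fin m → Fin n) (J : Fin l → Fin n) :
    tensV x y (Fin.append I J) = x I * y J := by
  simp [tensV]

lemma castV_apply_append_append {a b c : ℕ} (h : a + (b + c) = a + b + c)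
    (v : Vnm n (a + (b + c))) (I : Fin a → Fin n) (J : Fin b → Fin n) (K : Fin c → Fin n) :
    castV h v (Fin.append (Fin.append I J) K) = v (Fin.append I (Fin.append J K)) := by
  simp [castV, Fin.append_assoc]

lemma castV_apply_append_append' {a b c : ℕ} (h : a + b + c = a + (b + c))
    (v : Vnm n (a + b + c)) (I : Fin a → Fin n) (J : Fin b → Fin n) (K : Fin c → Fin n) :
    castV h v (Fin.append I (Fin.append J K)) = v (Fin.append (Fin.append I J) K) := by
  simp only [castV, PiLp.toLp_apply, Fin.append_assoc]
  rfl

lemma ext_append {a b : ℕ} {u v : Vnm n (a + b)}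
    (h : ∀ I J, u (Fin.append I J) = v (Fin.append I J)) : u = v :=
  PiLp.ext fun J => by
    simpa [Fin.append_castAdd_natAdd] using
      h (fun i => J (Fin.castAdd b i)) (fun i => J (Fin.natAdd a i))

lemma norm_castV {m m' : ℕ} (h : m = m') (z : Vnm n m) : ‖castV h z‖ = ‖z‖ := by
  subst h; rfl

lemma norm_tensV {m l : ℕ} (x : Vnm n m) (y : Vnm n l) : ‖tensV x y‖ = ‖x‖ * ‖y‖ := by
  rw [EuclideanSpace.norm_eq, EuclideanSpace.norm_eq, EuclideanSpace.norm_eq,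
    ← Real.sqrt_mul (by positivity)]
  congr 1
  rw [← (Fin.appendEquiv m l).sum_comp, Fintype.sum_prod_type, Finset.sum_mul_sum]
  refine Finset.sum_congr rfl fun I _ => Finset.sum_congr rfl fun J _ => ?_
  change ‖tensV x y (Fin.append I J)‖ ^ 2 = _
  rw [tensV_append, norm_mul, mul_pow]

lemma exists_index_ne_zero {m : ℕ} {w : Vnm n m} (hw : w ≠ 0) : ∃ K, w K ≠ 0 := by
  by_contra! h
  exact hw (PiLp.ext h)

lemma exists_eq_castV_tensV_left_of_tensV_eq {l d m k s : ℕ} (hd : l + d = m) (hs : l + s = m + k)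
    {x : Vnm n m} {y : Vnm n l} {w : Vnm n k} {z : Vnm n s} (hw : w ≠ 0)
    (heq : tensV x w = castV hs (tensV y z)) :
    ∃ x' : Vnm n d, x = castV hd (tensV y x') := by
  subst hd
  obtain rfl : s = d + k := by omega
  obtain ⟨K, hK⟩ := exists_index_ne_zero hw
  refine ⟨WithLp.toLp 2 fun J => (w K)⁻¹ * z (Fin.append J K), ext_append fun I J => ?_⟩
  have hIJK := congr(WithLp.ofLp $heq (Fin.append (Fin.append I J) K))
  rw [tensV_append, castV_apply_append_append, tensV_append] at hIJK
  rw [castV_rfl, tensV_append, PiLp.toLp_apply, mul_left_comm, ← hIJK, mul_comm,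
    mul_inv_cancel_right₀ hK]

lemma exists_eq_castV_tensV_right_of_tensV_eq {l d m k s : ℕ} (hd : d + l = m) (hs : s + l = k + m)
    {x : Vnm n m} {y : Vnm n l} {w : Vnm n k} {z : Vnm n s} (hw : w ≠ 0)
    (heq : tensV w x = castV hs (tensV z y)) :
    ∃ x'' : Vnm n d, x = castV hd (tensV x'' y) := by
  subst hd
  obtain rfl : s = k + d := by omega
  obtain ⟨K, hK⟩ := exists_index_ne_zero hw
  refine ⟨WithLp.toLp 2 fun J => (w K)⁻¹ * z (Fin.append K J), ext_append fun J I => ?_⟩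
  have hKJI := congr(WithLp.ofLp $heq (Fin.append K (Fin.append J I)))
  rw [tensV_append, castV_apply_append_append', tensV_append] at hKJI
  rw [castV_rfl, tensV_append, PiLp.toLp_apply, mul_assoc, ← hKJI, inv_mul_cancel_left₀ hK]

end

/-- equidivisibility: for unit vectors `x ∈ V_{n,m}`, `y ∈ V_{n,l}` with
`m > l`: (a) if `x ⊗ w = y ⊗ z` then `x = y ⊗ x'` for some unit vector `x' ∈ V_{n,m−l}`;
(b) if `w ⊗ x = z ⊗ y` then `x = x'' ⊗ y` for some unit vector `x'' ∈ V_{n,m−l}`. -/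
theorem subCuntz_stmt3 {n m l : ℕ} (hlm : l < m)
    (x : Vnm n m) (y : Vnm n l) (hx : ‖x‖ = 1) (hy : ‖y‖ = 1) :
    (∀ (k : ℕ) (w : Vnm n k) (z : Vnm n (m + k - l)), ‖w‖ = 1 → ‖z‖ = 1 →
      tensV x w = castV (by omega : l + (m + k - l) = m + k) (tensV y z) →
      ∃ x' : Vnm n (m - l), ‖x'‖ = 1 ∧ x = castV (by omega : l + (m - l) = m) (tensV y x')) ∧
    (∀ (k : ℕ) (w : Vnm n k) (z : Vnm n (m + k - l)), ‖w‖ = 1 → ‖z‖ = 1 →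
      tensV w x = castV (by omega : (m + k - l) + l = k + m) (tensV z y) →
      ∃ x'' : Vnm n (m - l), ‖x''‖ = 1 ∧ x = castV (by omega : (m - l) + l = m) (tensV x'' y)) := by
  have ne_zero {k : ℕ} {w : Vnm n k} (hw : ‖w‖ = 1) : w ≠ 0 := by
    rintro rfl
    simp at hw
  constructor
  · intro k w z hw _ heq
    obtain ⟨x', hx'⟩ :=
      exists_eq_castV_tensV_left_of_tensV_eq (d := m - l) (by omega) _ (ne_zero hw) heq
    refine ⟨x', ?_, hx'⟩
    simpa [norm_castV, norm_tensV, hx, hy] using (congrArg norm hx').symm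
  · intro k w z hw _ heq
    obtain ⟨x'', hx''⟩ :=
      exists_eq_castV_tensV_right_of_tensV_eq (d := m - l) (by omega) _ (ne_zero hw) heq
    refine ⟨x'', ?_, hx''⟩
    simpa [norm_castV, norm_tensV, hx, hy] using (congrArg norm hx'').symm
end
end

section
/- Let n ≥ 2, m ≥ 2, and let X, Y be unit vectors in V_{n,m}. Suppose that for some 1 ≤ a ≤ m−1 there exist a nonzero vector v ∈ V_{n,a} and c ∈ ℂ with |c| = 1 such that v = c · T_{m−a}(conj X) T_a(Y) v, where conj X denotes the coordinatewise complex conjugate of X. Then there exist unit vectors x₁ ∈ V_{n,a} and x₂ ∈ V_{n,m−a} such that X = x₁ ⊗ x₂ and Y = (conj c) x₂ ⊗ x₁. -/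
/-! Read `T_a(Y)` and `T_{m−a}(conj X)` as matrices `A`, `B` whose squared row norms sum to
`‖Y‖² = ‖X‖² = 1`. Cauchy–Schwarz row by row gives `‖A w‖ ≤ ‖w‖` and `‖B w‖ ≤ ‖w‖`, so
`v = c · B A v` with `|c| = 1` forces equality in every row: each row of `A` is a multiple of `v`
and each row of `B` a multiple of `u = A v`, with `‖u‖ = ‖v‖`. Reading off the coefficients from
`v = c · B u` gives `X = x₁ ⊗ x₂` and `Y = c̄ · x₂ ⊗ x₁` for `x₁ = c · conj v / ‖v‖`,
`x₂ = u / ‖v‖`. -/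

noncomputable section

section RowsCauchySchwarz

variable {𝕜 E ι : Type*} [RCLike 𝕜] [NormedAddCommGroup E] [InnerProductSpace 𝕜 E] [Fintype ι]

local notation "⟪" x ", " y "⟫" => inner 𝕜 x y

theorem norm_inner_sq_le (x y : E) : ‖⟪x, y⟫‖ ^ 2 ≤ ‖x‖ ^ 2 * ‖y‖ ^ 2 := by
  rw [← mul_pow]
  exact pow_le_pow_left₀ (norm_nonneg _) (norm_inner_le_norm x y) 2

theorem sum_norm_inner_sq_le (r : ι → E) (w : E) :
    ∑ i, ‖⟪r i, w⟫‖ ^ 2 ≤ (∑ i, ‖r i‖ ^ 2) * ‖w‖ ^ 2 := by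
  rw [Finset.sum_mul]
  exact Finset.sum_le_sum fun i _ => norm_inner_sq_le (r i) w

theorem eq_smul_of_sum_norm_sq_mul_le_sum_norm_inner_sq {r : ι → E} {w : E} (hw : w ≠ 0)
    (h : (∑ i, ‖r i‖ ^ 2) * ‖w‖ ^ 2 ≤ ∑ i, ‖⟪r i, w⟫‖ ^ 2) (i : ι) :
    r i = (⟪w, r i⟫ / ⟪w, w⟫) • w := by
  have hsum : ∑ i, ‖⟪r i, w⟫‖ ^ 2 = ∑ i, ‖r i‖ ^ 2 * ‖w‖ ^ 2 := by
    rw [← Finset.sum_mul]; exact le_antisymm (sum_norm_inner_sq_le r w) h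
  have hsq : ‖⟪w, r i⟫‖ ^ 2 = (‖w‖ * ‖r i‖) ^ 2 := by
    rw [norm_inner_symm, mul_pow, mul_comm]
    exact (Finset.sum_eq_sum_iff_of_le fun j _ => norm_inner_sq_le (r j) w).mp hsum i
      (Finset.mem_univ i)
  have hCS : ‖⟪w, r i⟫‖ = ‖w‖ * ‖r i‖ :=
    (pow_left_inj₀ (norm_nonneg _) (by positivity) two_ne_zero).mp hsq
  exact (((norm_inner_eq_norm_tfae 𝕜 w (r i)).out 0 1 rfl rfl).mp hCS).resolve_left hw

theorem norm_eq_and_rows_eq_smul_of_eigenvector {κ : Type*} [Fintype κ]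
    {a : κ → EuclideanSpace 𝕜 ι} {b : ι → EuclideanSpace 𝕜 κ}
    (ha : ∑ K, ‖a K‖ ^ 2 ≤ 1) (hb : ∑ J, ‖b J‖ ^ 2 ≤ 1)
    {u : EuclideanSpace 𝕜 κ} {v : EuclideanSpace 𝕜 ι} (hv : v ≠ 0) {c : 𝕜} (hc : ‖c‖ = 1)
    (hu : ∀ K, u K = ⟪a K, v⟫) (hvu : ∀ J, v J = c * ⟪b J, u⟫) :
    ‖u‖ = ‖v‖ ∧ (∀ K, a K = (starRingEnd 𝕜 (u K) / (‖v‖ : 𝕜) ^ 2) • v) ∧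
      ∀ J, b J = (c * starRingEnd 𝕜 (v J) / (‖v‖ : 𝕜) ^ 2) • u := by
  have hu_sq : ‖u‖ ^ 2 = ∑ K, ‖⟪a K, v⟫‖ ^ 2 := by simp only [EuclideanSpace.norm_sq_eq, hu]
  have hv_sq : ‖v‖ ^ 2 = ∑ J, ‖⟪b J, u⟫‖ ^ 2 := by
    simp only [EuclideanSpace.norm_sq_eq, hvu, norm_mul, hc, one_mul]
  have hu_le : ‖u‖ ^ 2 ≤ ‖v‖ ^ 2 := hu_sq ▸
    (sum_norm_inner_sq_le a v).trans (mul_le_of_le_one_left (sq_nonneg _) ha)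
  have hv_le : ‖v‖ ^ 2 ≤ ‖u‖ ^ 2 := hv_sq ▸
    (sum_norm_inner_sq_le b u).trans (mul_le_of_le_one_left (sq_nonneg _) hb)
  have huv : ‖u‖ = ‖v‖ :=
    (pow_left_inj₀ (norm_nonneg _) (norm_nonneg _) two_ne_zero).mp (le_antisymm hu_le hv_le)
  have hu0 : u ≠ 0 := by rw [← norm_ne_zero_iff, huv, norm_ne_zero_iff]; exact hv
  refine ⟨huv, fun K => ?_, fun J => ?_⟩
  · have hrow := eq_smul_of_sum_norm_sq_mul_le_sum_norm_inner_sq hv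
      ((mul_le_of_le_one_left (sq_nonneg _) ha).trans (hv_le.trans hu_sq.le)) K
    rwa [inner_self_eq_norm_sq_to_K, ← inner_conj_symm, ← hu] at hrow
  · have hrow := eq_smul_of_sum_norm_sq_mul_le_sum_norm_inner_sq hu0
      ((mul_le_of_le_one_left (sq_nonneg _) hb).trans (hu_le.trans hv_sq.le)) J
    have hinner : ⟪b J, u⟫ = starRingEnd 𝕜 c * v J := by
      rw [hvu, ← mul_assoc, RCLike.conj_mul, hc]; simp
    rwa [inner_self_eq_norm_sq_to_K, huv, ← inner_conj_symm, hinner, map_mul,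
      RCLike.conj_conj] at hrow

end RowsCauchySchwarz

theorem norm_div_smul_eq_one {𝕜 E : Type*} [RCLike 𝕜] [NormedAddCommGroup E] [NormedSpace 𝕜 E]
    {c : 𝕜} (hc : ‖c‖ = 1) {w : E} {r : ℝ} (hw : ‖w‖ = r) (hr : r ≠ 0) :
    ‖(c / r) • w‖ = 1 := by
  rw [norm_smul, norm_div, hc, RCLike.norm_ofReal, hw, abs_of_nonneg (hw ▸ norm_nonneg w)]
  exact one_div_mul_cancel hr

def concatEquiv (α : Type*) {p q m : ℕ} (h : p + q = m) :
    (Fin p → α) × (Fin q → α) ≃ (Fin m → α) :=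
  (Fin.appendEquiv p q).trans (Equiv.arrowCongr (finCongr h) (Equiv.refl _))

def rowV {n p q m : ℕ} (h : p + q = m) (z : Vnm n m) (J : Fin p → Fin n) : Vnm n q :=
  WithLp.toLp 2 fun K => z (concatEquiv (Fin n) h (J, K))

theorem sum_norm_rowV_sq {n p q m : ℕ} (h : p + q = m) (z : Vnm n m) :
    ∑ J, ‖rowV h z J‖ ^ 2 = ‖z‖ ^ 2 := by
  simp only [EuclideanSpace.norm_sq_eq, rowV]
  rw [← Fintype.sum_prod_type', Equiv.sum_comp (concatEquiv (Fin n) h) fun L => ‖z L‖ ^ 2]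

theorem ext_concatEquiv {n p q m : ℕ} (h : p + q = m) {z w : Vnm n m}
    (hzw : ∀ J K, z (concatEquiv (Fin n) h (J, K)) = w (concatEquiv (Fin n) h (J, K))) : z = w := by
  ext L
  obtain ⟨⟨J, K⟩, rfl⟩ := (concatEquiv (Fin n) h).surjective L
  exact hzw J K

theorem castV_tensV_concatEquiv {n p q m : ℕ} (h : p + q = m) (x : Vnm n p) (y : Vnm n q)
    (J : Fin p → Fin n) (K : Fin q → Fin n) :
    castV h (tensV x y) (concatEquiv (Fin n) h (J, K)) = x J * y K := by
  simp [castV, tensV, concatEquiv]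

theorem eq_castV_tensV_of_rowV_eq_smul {n p q m : ℕ} (h : p + q = m) {z : Vnm n m}
    {x : Vnm n p} {y : Vnm n q} (hz : ∀ J, rowV h z J = x J • y) : z = castV h (tensV x y) := by
  refine ext_concatEquiv h fun J K => ?_
  rw [castV_tensV_concatEquiv, ← smul_eq_mul, ← PiLp.smul_apply, ← hz]
  rfl

theorem smul_castV_tensV {n p q m : ℕ} (h : p + q = m) (d : ℂ) (x : Vnm n p) (y : Vnm n q) :
    d • castV h (tensV x y) = castV h (tensV (d • x) y) := by
  ext L; simp [castV, tensV, mul_assoc]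

theorem conjV_conjV {n m : ℕ} (z : Vnm n m) : conjV (conjV z) = z := by
  ext J; simp [conjV]

theorem norm_conjV {n m : ℕ} (z : Vnm n m) : ‖conjV z‖ = ‖z‖ := by
  simp [EuclideanSpace.norm_eq, conjV]

theorem conjV_smul {n m : ℕ} (d : ℂ) (z : Vnm n m) :
    conjV (d • z) = starRingEnd ℂ d • conjV z := by
  ext J; simp [conjV]

theorem rowV_conjV {n p q m : ℕ} (h : p + q = m) (z : Vnm n m) (J : Fin p → Fin n) :
    rowV h (conjV z) J = conjV (rowV h z J) := rfl

theorem Tmat_apply {n m q : ℕ} (hq : q ≤ m) (z : Vnm n m) (w : Vnm n q)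
    (J : Fin (m - q) → Fin n) :
    Tmat q hq z w J = inner ℂ (rowV (Nat.sub_add_cancel hq) (conjV z) J) w := by
  simp only [Tmat, matT, castV, LinearMap.coe_toContinuousLinearMap', Matrix.toLpLin_apply,
    Matrix.mulVec, dotProduct, Matrix.of_apply, rowV, conjV, PiLp.inner_apply, RCLike.inner_apply,
    RingHomCompTriple.comp_apply, RingHom.id_apply]
  exact Finset.sum_congr rfl fun K _ => mul_comm _ _

theorem castV_Tmat_apply {n m p q : ℕ} (hq : q ≤ m) (hp : m - q = p) (h : p + q = m)
    (z : Vnm n m) (w : Vnm n q) (J : Fin p → Fin n) :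
    castV hp (Tmat q hq z w) J = inner ℂ (rowV h (conjV z) J) w := by
  subst hp
  exact Tmat_apply hq z w J

/-- if `v ≠ 0` satisfies `v = c · T_{m−a}(conj X) T_a(Y) v` with `|c| = 1`,
then `X = x₁ ⊗ x₂` and `Y = (conj c) x₂ ⊗ x₁` for some unit vectors `x₁ ∈ V_{n,a}`,
`x₂ ∈ V_{n,m−a}`. -/
theorem subCuntz_stmt4 {n m a : ℕ} (ha2 : a ≤ m - 1)
    (X Y : Vnm n m) (hX : ‖X‖ = 1) (hY : ‖Y‖ = 1)
    (v : Vnm n a) (hv : v ≠ 0) (c : ℂ) (hc : ‖c‖ = 1)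
    (heq : v = c • castV (by omega : m - (m - a) = a)
      (Tmat (m - a) (by omega) (conjV X) (Tmat a (by omega) Y v))) :
    ∃ (x₁ : Vnm n a) (x₂ : Vnm n (m - a)), ‖x₁‖ = 1 ∧ ‖x₂‖ = 1 ∧
      X = castV (by omega : a + (m - a) = m) (tensV x₁ x₂) ∧
      Y = (starRingEnd ℂ c) • castV (by omega : (m - a) + a = m) (tensV x₂ x₁) := by
  have hab : a + (m - a) = m := by omega
  have hba : m - a + a = m := by omega
  obtain ⟨huv, hYrow, hXrow⟩ := norm_eq_and_rows_eq_smul_of_eigenvector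
    (a := rowV hba (conjV Y)) (b := rowV hab X)
    (by rw [sum_norm_rowV_sq, norm_conjV, hY, one_pow]) (by rw [sum_norm_rowV_sq, hX, one_pow])
    hv hc (fun K => Tmat_apply _ Y v K) (fun J => by
      conv_lhs => rw [heq]
      rw [PiLp.smul_apply, smul_eq_mul, castV_Tmat_apply _ _ hab, conjV_conjV])
  -- the general lemma casts `‖v‖` via `RCLike.ofReal`, which `field_simp` does not see through
  simp only [RCLike.ofReal_eq_complex_ofReal] at hXrow hYrow
  have hv0 : ‖v‖ ≠ 0 := norm_ne_zero_iff.mpr hv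
  have hcc : starRingEnd ℂ c * c = 1 := by rw [RCLike.conj_mul, hc]; norm_num
  refine ⟨(c / ‖v‖) • conjV v, (1 / ‖v‖ : ℂ) • Tmat a (by omega) Y v,
    norm_div_smul_eq_one hc (norm_conjV v) hv0, norm_div_smul_eq_one norm_one huv hv0, ?_, ?_⟩
  · refine eq_castV_tensV_of_rowV_eq_smul hab fun J => ?_
    rw [hXrow, smul_smul]
    congr 1
    simp only [PiLp.smul_apply, smul_eq_mul, conjV]
    field_simp
  · rw [smul_castV_tensV]
    refine eq_castV_tensV_of_rowV_eq_smul hba fun K => ?_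
    have hrow := congrArg conjV (hYrow K)
    rw [rowV_conjV, conjV_conjV, conjV_smul] at hrow
    rw [hrow, smul_smul]
    congr 1
    simp only [PiLp.smul_apply, smul_eq_mul, map_div₀, map_pow, Complex.conj_ofReal,
      RingHomCompTriple.comp_apply, RingHom.id_apply]
    field_simp [hv0]
    linear_combination (-Tmat a (by omega) Y v K) * hcc
end
end

section
/- Let n ≥ 2, let x be a unit vector in V_{n,m} and y a unit vector in V_{n,l}, and suppose x^{⊗α} = y^{⊗β} for some integers α, β ≥ 1. Then there exist a unit vector w, integers k₁, k₂ ≥ 1, and γ₁, γ₂ ∈ ℂ with |γ₁| = |γ₂| = 1, such that x = γ₁ w^{⊗k₁} and y = γ₂ w^{⊗k₂}. In particular: if m > l, then x is periodic; and if x is nonperiodic, then y = c x^{⊗d} for some d ≥ 1 and c ∈ ℂ with |c| = 1. -/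
noncomputable section

/-!
Read a tensor of degree `m` as a function of infinite index sequences through their first `m`
letters (`Vnm.ev`); then `x ⊗ y` becomes `f ↦ x(f) · y(shift m f)` and all re-indexing casts
disappear, so the Lyndon–Schützenberger argument for words goes through. If
`x^{⊗α} = y^{⊗β}` with `l ≤ m`, comparing prefixes gives `x = y ⊗ t`; for `q = t ⊗ y` one has
`y ⊗ q^{⊗α} = x^{⊗α} ⊗ y = y ⊗ x^{⊗α}`, so `q^{⊗α} = x^{⊗α}`, whence `q = μ x` and
`x ⊗ y = μ y ⊗ x`. A relation `x ⊗ y = c y ⊗ x` with `l < m` again splits `x = y ⊗ t` with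
`t ⊗ y = c y ⊗ t`; this Euclidean descent on the degrees ends with proportional tensors of equal
degree, and unwinding it writes `x` and `y` as phases times powers of one unit vector.
-/

namespace Vnm

section Sequences

variable {α : Type*}

def shift (k : ℕ) (f : ℕ → α) : ℕ → α := fun i => f (k + i)

@[simp]
lemma shift_zero (f : ℕ → α) : shift 0 f = f := by
  funext i; simp [shift]

lemma shift_shift (a b : ℕ) (f : ℕ → α) : shift a (shift b f) = shift (b + a) f := by
  funext i; simp [shift, add_assoc]

def prepend {m : ℕ} (J : Fin m → α) (g : ℕ → α) : ℕ → α :=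
  fun i => if h : i < m then J ⟨i, h⟩ else g (i - m)

@[simp]
lemma prepend_val {m : ℕ} (J : Fin m → α) (g : ℕ → α) (i : Fin m) : prepend J g i = J i :=
  dif_pos i.isLt

@[simp]
lemma shift_prepend {m : ℕ} (J : Fin m → α) (g : ℕ → α) : shift m (prepend J g) = g := by
  funext i; simp [shift, prepend]

def cycle {m : ℕ} (hm : 0 < m) (J : Fin m → α) : ℕ → α := fun i => J ⟨i % m, Nat.mod_lt _ hm⟩

@[simp]
lemma cycle_val {m : ℕ} (hm : 0 < m) (J : Fin m → α) (i : Fin m) : cycle hm J i = J i := by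
  simp [cycle, Nat.mod_eq_of_lt i.isLt]

@[simp]
lemma shift_mul_cycle {m : ℕ} (hm : 0 < m) (J : Fin m → α) (k : ℕ) :
    shift (k * m) (cycle hm J) = cycle hm J := by
  funext i; simp [shift, cycle]

end Sequences

variable {n : ℕ}

def ev {m : ℕ} (z : Vnm n m) (f : ℕ → Fin n) : ℂ := z fun i => f i

@[simp]
lemma ev_prepend {m : ℕ} (z : Vnm n m) (J : Fin m → Fin n) (g : ℕ → Fin n) :
    ev z (prepend J g) = z J := by
  simp [ev]

@[simp]
lemma ev_cycle {m : ℕ} (hm : 0 < m) (z : Vnm n m) (J : Fin m → Fin n) :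
    ev z (cycle hm J) = z J := by
  simp [ev]

@[simp]
lemma ev_castV {m m' : ℕ} (h : m = m') (z : Vnm n m) (f : ℕ → Fin n) :
    ev (castV h z) f = ev z f := rfl

@[simp]
lemma ev_tensV {m l : ℕ} (x : Vnm n m) (y : Vnm n l) (f : ℕ → Fin n) :
    ev (tensV x y) f = ev x f * ev y (shift m f) := rfl

@[simp]
lemma ev_smul {m : ℕ} (c : ℂ) (z : Vnm n m) (f : ℕ → Fin n) : ev (c • z) f = c * ev z f := rfl

lemma ext_ev (hn : 0 < n) {m : ℕ} {z z' : Vnm n m} (h : ∀ f, ev z f = ev z' f) : z = z' := by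
  ext J
  simpa using h (prepend J fun _ => ⟨0, hn⟩)

lemma exists_apply_ne_zero {m : ℕ} {x : Vnm n m} (hx : x ≠ 0) : ∃ J, x J ≠ 0 := by
  by_contra! h
  exact hx (by ext J; simp [h J])

lemma ev_right_cancel {m : ℕ} {x : Vnm n m} (hx : x ≠ 0) {U V : (ℕ → Fin n) → ℂ}
    (h : ∀ f, ev x f * U (shift m f) = ev x f * V (shift m f)) (g : ℕ → Fin n) : U g = V g := by
  obtain ⟨J, hJ⟩ := exists_apply_ne_zero hx
  simpa [hJ] using h (prepend J g)

def evPow {a : ℕ} (w : Vnm n a) (k : ℕ) (f : ℕ → Fin n) : ℂ :=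
  ∏ i : Fin k, ev w (shift (i * a) f)

@[simp]
lemma ev_tpowV {a : ℕ} (w : Vnm n a) (k : ℕ) (f : ℕ → Fin n) :
    ev (tpowV w k) f = evPow w k f := rfl

@[simp]
lemma evPow_one {a : ℕ} (w : Vnm n a) (f : ℕ → Fin n) : evPow w 1 f = ev w f := by
  simp [evPow]

lemma evPow_add {a : ℕ} (w : Vnm n a) (k k' : ℕ) (f : ℕ → Fin n) :
    evPow w (k + k') f = evPow w k f * evPow w k' (shift (k * a) f) := by
  simp only [evPow, Fin.prod_univ_add, Fin.val_castAdd, Fin.val_natAdd, shift_shift, add_mul]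

lemma evPow_succ {a : ℕ} (w : Vnm n a) (k : ℕ) (f : ℕ → Fin n) :
    evPow w (k + 1) f = ev w f * evPow w k (shift a f) := by
  rw [add_comm, evPow_add, evPow_one, one_mul]

@[simp]
lemma evPow_cycle {m : ℕ} (hm : 0 < m) (z : Vnm n m) (J : Fin m → Fin n) (k : ℕ) :
    evPow z k (cycle hm J) = z J ^ k := by
  simp [evPow]

lemma evPow_of_ev_eq_mul {a : ℕ} {x w : Vnm n a} {γ : ℂ} (h : ∀ f, ev x f = γ * ev w f)
    (k : ℕ) (f : ℕ → Fin n) : evPow x k f = γ ^ k * evPow w k f := by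
  simp [evPow, h, Finset.prod_mul_distrib]

lemma norm_castV {m m' : ℕ} (h : m = m') (z : Vnm n m) : ‖castV h z‖ = ‖z‖ := by
  subst h; rfl

lemma norm_tensV {m l : ℕ} (x : Vnm n m) (y : Vnm n l) : ‖tensV x y‖ = ‖x‖ * ‖y‖ := by
  rw [EuclideanSpace.norm_eq, EuclideanSpace.norm_eq, EuclideanSpace.norm_eq,
    ← Real.sqrt_mul (by positivity), Finset.sum_mul_sum, ← Fintype.sum_prod_type',
    ← (Fin.appendEquiv m l).sum_comp]
  simp [tensV, mul_pow]

lemma exists_ev_eq_mul_shift {m l : ℕ} (hlm : l ≤ m) (x : Vnm n m) (y : Vnm n l)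
    (U V : (ℕ → Fin n) → ℂ) (T : ℕ → Fin n) (hT : U T ≠ 0)
    (h : ∀ f, ev x f * U (shift m f) = ev y f * V (shift l f)) :
    ∃ t : Vnm n (m - l), ∀ f, ev x f = ev y f * ev t (shift l f) := by
  refine ⟨WithLp.toLp 2 fun R => V (prepend R T) / U T, fun f => ?_⟩
  have hf := h (prepend (fun i : Fin m => f i) T)
  have hx : ev x (prepend (fun i : Fin m => f i) T) = ev x f := by simp [ev]
  have hy : ev y (prepend (fun i : Fin m => f i) T) = ev y f :=
    congrArg y (funext fun i => dif_pos (by omega))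
  have hshift : shift l (prepend (fun i : Fin m => f i) T)
      = prepend (fun i : Fin (m - l) => shift l f i) T := by
    funext i
    by_cases hi : i < m - l
    · simp [shift, prepend, hi, show l + i < m by omega]
    · simp only [shift, prepend, hi, show ¬ l + i < m by omega, dite_false]
      congr 1; omega
  rw [hx, hy, hshift, shift_prepend] at hf
  simp only [ev]
  rw [← mul_div_assoc, eq_div_iff hT]
  exact hf

lemma norm_eq_one_of_ev_eq_mul (hn : 0 < n) {m l : ℕ} (hlm : l ≤ m) {x : Vnm n m}
    {y : Vnm n l} {t : Vnm n (m - l)} (h : ∀ f, ev x f = ev y f * ev t (shift l f))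
    (hx : ‖x‖ = 1) (hy : ‖y‖ = 1) : ‖t‖ = 1 := by
  have hxyt : x = castV (by omega) (tensV y t) := ext_ev hn h
  rwa [hxyt, norm_castV, norm_tensV, hy, one_mul] at hx

def HasCommonRoot {m l : ℕ} (x : Vnm n m) (y : Vnm n l) : Prop :=
  ∃ (a : ℕ) (w : Vnm n a) (k₁ k₂ : ℕ) (γ₁ γ₂ : ℂ), k₁ * a = m ∧ k₂ * a = l ∧ ‖w‖ = 1 ∧
    1 ≤ k₁ ∧ 1 ≤ k₂ ∧ ‖γ₁‖ = 1 ∧ ‖γ₂‖ = 1 ∧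
    (∀ f, ev x f = γ₁ * evPow w k₁ f) ∧ ∀ f, ev y f = γ₂ * evPow w k₂ f

lemma HasCommonRoot.symm {m l : ℕ} {x : Vnm n m} {y : Vnm n l} (h : HasCommonRoot x y) :
    HasCommonRoot y x := by
  obtain ⟨a, w, k₁, k₂, γ₁, γ₂, h₁, h₂, hw, hk₁, hk₂, hγ₁, hγ₂, hx, hy⟩ := h
  exact ⟨a, w, k₂, k₁, γ₂, γ₁, h₂, h₁, hw, hk₂, hk₁, hγ₂, hγ₁, hy, hx⟩

lemma hasCommonRoot_of_eq_smul {m : ℕ} {x y : Vnm n m} {μ : ℂ} (hx : ‖x‖ = 1) (hy : ‖y‖ = 1)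
    (hxy : x = μ • y) : HasCommonRoot x y := by
  have hμ : ‖μ‖ = 1 := by rwa [hxy, norm_smul, hy, mul_one] at hx
  exact ⟨m, y, 1, 1, μ, 1, one_mul m, one_mul m, hy, le_rfl, le_rfl, hμ, norm_one,
    fun f => by simp [hxy], fun f => by simp⟩

lemma HasCommonRoot.of_ev_eq_mul {m l : ℕ} {x : Vnm n m} {y : Vnm n l} {t : Vnm n (m - l)}
    (hlm : l ≤ m) (hxyt : ∀ f, ev x f = ev y f * ev t (shift l f)) (h : HasCommonRoot t y) :
    HasCommonRoot x y := by
  obtain ⟨a, w, kt, ky, γt, γy, hkt, hky, hw, hkt1, hky1, hγt, hγy, ht, hy⟩ := h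
  refine ⟨a, w, ky + kt, ky, γy * γt, γy, by rw [add_mul]; omega, hky, hw, by omega, hky1,
    by rw [norm_mul, hγt, hγy, mul_one], hγy, ?_, hy⟩
  intro f
  rw [hxyt, hy, ht, evPow_add, hky]
  ring

def CommuteUpTo {m l : ℕ} (c : ℂ) (x : Vnm n m) (y : Vnm n l) : Prop :=
  ∀ f, ev x f * ev y (shift m f) = c * (ev y f * ev x (shift l f))

lemma CommuteUpTo.ne_zero {m l : ℕ} (hl : 0 < l) {c : ℂ} {x : Vnm n m} {y : Vnm n l}
    (hx : x ≠ 0) (hy : y ≠ 0) (h : CommuteUpTo c x y) : c ≠ 0 := by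
  obtain ⟨J, hJ⟩ := exists_apply_ne_zero hx
  obtain ⟨K, hK⟩ := exists_apply_ne_zero hy
  rintro rfl
  simpa [hJ, hK] using h (prepend J (cycle hl K))

lemma CommuteUpTo.symm {m l : ℕ} {c : ℂ} {x : Vnm n m} {y : Vnm n l} (hc : c ≠ 0)
    (h : CommuteUpTo c x y) : CommuteUpTo c⁻¹ y x := fun f => by
  rw [h f, inv_mul_cancel_left₀ hc]

lemma CommuteUpTo.exists_eq_smul {m : ℕ} (hm : 0 < m) {c : ℂ} {x y : Vnm n m} (hy : y ≠ 0)
    (h : CommuteUpTo c x y) : ∃ μ : ℂ, x = μ • y := by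
  obtain ⟨K, hK⟩ := exists_apply_ne_zero hy
  refine ⟨c * x K / y K, ?_⟩
  ext J
  have hJ := h (prepend J (cycle hm K))
  simp only [ev_prepend, shift_prepend, ev_cycle] at hJ
  simp only [PiLp.smul_apply, smul_eq_mul]
  field_simp
  linear_combination hJ

lemma CommuteUpTo.exists_ev_eq_mul_shift (hn : 0 < n) {m l : ℕ} (hl : 0 < l) (hlm : l ≤ m) {c : ℂ}
    {x : Vnm n m} {y : Vnm n l} (hx : ‖x‖ = 1) (hy : ‖y‖ = 1) (h : CommuteUpTo c x y) :
    ∃ t : Vnm n (m - l), ‖t‖ = 1 ∧ (∀ f, ev x f = ev y f * ev t (shift l f)) ∧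
      CommuteUpTo c t y := by
  have hy0 : y ≠ 0 := ne_zero_of_norm_ne_zero (hy ▸ one_ne_zero)
  obtain ⟨K, hK⟩ := exists_apply_ne_zero hy0
  obtain ⟨t, ht⟩ := Vnm.exists_ev_eq_mul_shift hlm x y (ev y) (fun g => c * ev x g) (cycle hl K)
    (by simpa using hK) (fun f => by rw [h f]; ring)
  refine ⟨t, norm_eq_one_of_ev_eq_mul hn hlm ht hx hy, ht, ev_right_cancel hy0 fun f => ?_⟩
  have hf := h f
  rw [ht f, ht (shift l f), show shift m f = shift (m - l) (shift l f) by
    rw [shift_shift, Nat.add_sub_cancel' hlm]] at hf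
  linear_combination hf

theorem hasCommonRoot_of_commuteUpTo (hn : 0 < n) {m l : ℕ} (hm : 0 < m) (hl : 0 < l) {c : ℂ}
    {x : Vnm n m} {y : Vnm n l} (hx : ‖x‖ = 1) (hy : ‖y‖ = 1) (h : CommuteUpTo c x y) :
    HasCommonRoot x y := by
  induction hN : m + l using Nat.strong_induction_on generalizing m l c with
  | _ N ih =>
  have hx0 : x ≠ 0 := ne_zero_of_norm_ne_zero (hx ▸ one_ne_zero)
  have hy0 : y ≠ 0 := ne_zero_of_norm_ne_zero (hy ▸ one_ne_zero)
  rcases lt_trichotomy l m with hlm | rfl | hml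
  · obtain ⟨t, ht1, hxyt, htc⟩ := h.exists_ev_eq_mul_shift hn hl hlm.le hx hy
    exact .of_ev_eq_mul hlm.le hxyt (ih _ (by omega) (by omega) hl ht1 hy htc rfl)
  · obtain ⟨μ, hμ⟩ := h.exists_eq_smul hm hy0
    exact hasCommonRoot_of_eq_smul hx hy hμ
  · obtain ⟨t, ht1, hyxt, htc⟩ :=
      (h.symm (h.ne_zero hl hx0 hy0)).exists_ev_eq_mul_shift hn hm hml.le hy hx
    exact (HasCommonRoot.of_ev_eq_mul hml.le hyxt
      (ih _ (by omega) (by omega) hm ht1 hx htc rfl)).symm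

lemma exists_eq_smul_of_evPow_eq {m α : ℕ} (hm : 0 < m) (hα : 1 ≤ α) {x q : Vnm n m}
    (hx : x ≠ 0) (h : ∀ f, evPow q α f = evPow x α f) : ∃ μ : ℂ, q = μ • x := by
  obtain ⟨A, hA⟩ := exists_apply_ne_zero hx
  obtain ⟨a, rfl⟩ : ∃ a, α = a + 1 := ⟨α - 1, by omega⟩
  have key : ∀ J, q J * q A ^ a = x J * x A ^ a := fun J => by
    simpa [evPow_succ] using h (prepend J (cycle hm A))
  have hqA : q A ≠ 0 := by
    intro hq
    have hA' := key A
    rw [hq, zero_mul, eq_comm] at hA'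
    exact mul_ne_zero hA (pow_ne_zero a hA) hA'
  refine ⟨x A ^ a / q A ^ a, ?_⟩
  ext J
  simp only [PiLp.smul_apply, smul_eq_mul]
  field_simp
  linear_combination key J

lemma ev_mul_evPow_shift_of_ev_mul_shift {m l : ℕ} {x q : Vnm n m} {y : Vnm n l}
    (h : ∀ f, ev y f * ev q (shift l f) = ev x f * ev y (shift m f)) (k : ℕ) (f : ℕ → Fin n) :
    ev y f * evPow q k (shift l f) = evPow x k f * ev y (shift (k * m) f) := by
  induction k generalizing f with
  | zero => simp [evPow]
  | succ k ih =>
    rw [evPow_succ, evPow_succ, ← mul_assoc, h, shift_shift, add_comm l m, ← shift_shift,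
      mul_assoc, ih, shift_shift, add_mul, one_mul, add_comm m]
    ring

theorem commuteUpTo_of_evPow_eq {m l α β : ℕ} (hm : 0 < m) (hlm : l ≤ m) (hα : 1 ≤ α)
    (hβ : 1 ≤ β) (hd : α * m = β * l) {x : Vnm n m} {y : Vnm n l} (hx : x ≠ 0) (hy : y ≠ 0)
    (h : ∀ f, evPow x α f = evPow y β f) : ∃ c, CommuteUpTo c x y := by
  obtain ⟨J, hJ⟩ := exists_apply_ne_zero hx
  obtain ⟨a, rfl⟩ : ∃ a, α = a + 1 := ⟨α - 1, by omega⟩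
  obtain ⟨b, rfl⟩ : ∃ b, β = b + 1 := ⟨β - 1, by omega⟩
  obtain ⟨t, hxyt⟩ := exists_ev_eq_mul_shift hlm x y (evPow x a) (evPow y b) (cycle hm J)
    (by simpa using pow_ne_zero a hJ) (fun f => by rw [← evPow_succ, ← evPow_succ, h])
  set q : Vnm n m := castV (Nat.sub_add_cancel hlm) (tensV t y)
  have hyq : ∀ f, ev y f * ev q (shift l f) = ev x f * ev y (shift m f) := fun f => by
    simp only [q, ev_castV, ev_tensV, hxyt, shift_shift, Nat.add_sub_cancel' hlm]
    ring
  -- `x^α ⊗ y = y^(β+1) = y ⊗ x^α`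
  have hpow_comm : ∀ f, evPow x (a + 1) f * ev y (shift ((a + 1) * m) f)
      = ev y f * evPow x (a + 1) (shift l f) := fun f => by
    rw [h, h, hd, ← evPow_one y (shift _ f), ← evPow_add, ← evPow_succ]
  have hq : ∀ g, evPow q (a + 1) g = evPow x (a + 1) g := ev_right_cancel hy fun f => by
    rw [ev_mul_evPow_shift_of_ev_mul_shift hyq, hpow_comm]
  obtain ⟨μ, hμ⟩ := exists_eq_smul_of_evPow_eq hm hα hx hq
  refine ⟨μ, fun f => ?_⟩
  have htyμ := congrArg (ev · (shift l f)) hμ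
  simp only [q, ev_castV, ev_tensV, ev_smul, shift_shift, Nat.add_sub_cancel' hlm] at htyμ
  rw [hxyt f]
  linear_combination ev y f * htyμ

theorem hasCommonRoot_of_evPow_eq (hn : 0 < n) {m l α β : ℕ} (hm : 0 < m) (hl : 0 < l)
    (hα : 1 ≤ α) (hβ : 1 ≤ β) (hd : α * m = β * l) {x : Vnm n m} {y : Vnm n l}
    (hx : ‖x‖ = 1) (hy : ‖y‖ = 1) (h : ∀ f, evPow x α f = evPow y β f) :
    HasCommonRoot x y := by
  have hx0 : x ≠ 0 := ne_zero_of_norm_ne_zero (hx ▸ one_ne_zero)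
  have hy0 : y ≠ 0 := ne_zero_of_norm_ne_zero (hy ▸ one_ne_zero)
  rcases le_total l m with hlm | hml
  · obtain ⟨c, hc⟩ := commuteUpTo_of_evPow_eq hm hlm hα hβ hd hx0 hy0 h
    exact hasCommonRoot_of_commuteUpTo hn hm hl hx hy hc
  · obtain ⟨c, hc⟩ := commuteUpTo_of_evPow_eq hl hml hβ hα hd.symm hy0 hx0 fun f => (h f).symm
    exact (hasCommonRoot_of_commuteUpTo hn hl hm hy hx hc).symm

lemma periodicV_of_ev_eq_mul_evPow (hn : 0 < n) {m a k : ℕ} (hk : 2 ≤ k) (h : k * a = m)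
    {x : Vnm n m} {w : Vnm n a} {γ : ℂ} (hw : ‖w‖ = 1) (hγ : ‖γ‖ = 1)
    (hx : ∀ f, ev x f = γ * evPow w k f) : PeriodicV x := by
  obtain ⟨δ, hδ⟩ := IsAlgClosed.exists_pow_nat_eq γ (by omega : 0 < k)
  have hδ1 : ‖δ‖ = 1 := by
    rwa [← hδ, norm_pow, pow_eq_one_iff_of_nonneg (norm_nonneg _) (by omega)] at hγ
  refine ⟨a, k, δ • w, h, by rw [norm_smul, hδ1, hw, mul_one], hk, ext_ev hn fun f => ?_⟩
  rw [ev_castV, ev_tpowV, evPow_of_ev_eq_mul (ev_smul δ w), hδ, hx]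

end Vnm

open Vnm

/-- if `x^{⊗α} = y^{⊗β}` for some `α, β ≥ 1`, then `x` and `y` are powers
of a common unit vector `w` up to phases; in particular, if `m > l` then `x` is periodic,
and if `x` is nonperiodic then `y = c x^{⊗d}` for some `d ≥ 1` and `|c| = 1`. -/
theorem subCuntz_stmt7 {n m l : ℕ} (hn : 2 ≤ n) (hm : 1 ≤ m) (hl : 1 ≤ l)
    (x : Vnm n m) (y : Vnm n l) (hx : ‖x‖ = 1) (hy : ‖y‖ = 1)
    (α β : ℕ) (hα : 1 ≤ α) (hβ : 1 ≤ β) (hd : α * m = β * l)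
    (heq : castV hd (tpowV x α) = tpowV y β) :
    (∃ (a : ℕ) (w : Vnm n a) (k₁ k₂ : ℕ) (γ₁ γ₂ : ℂ)
        (h₁ : k₁ * a = m) (h₂ : k₂ * a = l),
      ‖w‖ = 1 ∧ 1 ≤ k₁ ∧ 1 ≤ k₂ ∧ ‖γ₁‖ = 1 ∧ ‖γ₂‖ = 1 ∧
      x = γ₁ • castV h₁ (tpowV w k₁) ∧ y = γ₂ • castV h₂ (tpowV w k₂)) ∧
    (l < m → PeriodicV x) ∧
    (¬ PeriodicV x → ∃ (d : ℕ) (c : ℂ) (h : d * m = l),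
      1 ≤ d ∧ ‖c‖ = 1 ∧ y = c • castV h (tpowV x d)) := by
  have hn0 : 0 < n := by omega
  obtain ⟨a, w, k₁, k₂, γ₁, γ₂, h₁, h₂, hw, hk₁, hk₂, hγ₁, hγ₂, hxw, hyw⟩ :=
    hasCommonRoot_of_evPow_eq hn0 hm hl hα hβ hd hx hy fun f => congrArg (ev · f) heq
  have hperiodic : 2 ≤ k₁ → PeriodicV x := fun hk =>
    periodicV_of_ev_eq_mul_evPow hn0 hk h₁ hw hγ₁ hxw
  refine ⟨⟨a, w, k₁, k₂, γ₁, γ₂, h₁, h₂, hw, hk₁, hk₂, hγ₁, hγ₂, ext_ev hn0 hxw,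
    ext_ev hn0 hyw⟩, fun hlm => hperiodic ?_, fun hnp => ?_⟩
  · by_contra hk
    obtain rfl : k₁ = 1 := by omega
    nlinarith
  · obtain rfl : k₁ = 1 := by
      by_contra hk
      exact hnp (hperiodic (by omega))
    obtain rfl : a = m := by simpa using h₁
    have hγ₁0 : γ₁ ≠ 0 := ne_zero_of_norm_ne_zero (hγ₁ ▸ one_ne_zero)
    refine ⟨k₂, γ₂ / γ₁ ^ k₂, h₂, hk₂, by simp [hγ₁, hγ₂], ext_ev hn0 fun f => ?_⟩
    have hxw1 : ∀ f, ev x f = γ₁ * ev w f := by simpa using hxw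
    rw [ev_smul, ev_castV, ev_tpowV, hyw, evPow_of_ev_eq_mul hxw1]
    field_simp
end
end

section
/- Let n, n' ≥ 2, let z be a nonperiodic unit vector in V_{n,m} and y a nonperiodic unit vector in V_{n',l}. Then z * y is a nonperiodic unit vector in V_{nn',d}, where d is the least common multiple of m and l. -/
noncomputable section

/-!
Suppose `z * y = x^{⊗p}` with `p ≥ 2` and `x` of degree `m'`. Freezing all but the first `m'`
letters shows that `x` splits along the pairing of alphabets, `x (a ⊠ b) = u a * v b`, so that
`z^{⊗α}` is proportional to `u^{⊗p}` and `y^{⊗β}` to `v^{⊗p}`. Proportional powers commute up to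
a scalar, `z ⊗ u = γ • u ⊗ z`, and the Euclidean algorithm on degrees (as in the
Lyndon–Schützenberger theorem for words) makes `z` a multiple of a power of a tensor of degree
`gcd m m'`. Nonperiodicity forces `m ∣ m'`, likewise `l ∣ m'`, so `lcm m l ∣ m'`, which
contradicts `p * m' = lcm m l`. The norm is multiplicative under `⊗` and `⊠`.
-/

namespace SubCuntz

open Set

section Sequences

variable {A β : Type*}

def shift (r : ℕ) (s : ℕ → A) : ℕ → A := fun i => s (i + r)

def glue (r : ℕ) (a s : ℕ → A) : ℕ → A := fun i => if i < r then a i else s (i - r)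

@[simp] lemma shift_zero (s : ℕ → A) : shift 0 s = s := rfl

@[simp] lemma shift_shift (r q : ℕ) (s : ℕ → A) : shift r (shift q s) = shift (r + q) s := by
  funext i; simp [shift, Nat.add_assoc]

@[simp] lemma shift_glue (r : ℕ) (a s : ℕ → A) : shift r (glue r a s) = s := by
  funext i; simp [shift, glue]

lemma shift_glue_of_le {r d : ℕ} (h : r ≤ d) (a s : ℕ → A) :
    shift r (glue d a s) = glue (d - r) (shift r a) s := by
  funext i; simp only [shift, glue]
  split_ifs <;> first | rfl | omega | (congr 1; omega)

lemma shift_glue_of_ge {r q : ℕ} (h : r ≤ q) (a s : ℕ → A) :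
    shift q (glue r a s) = shift (q - r) s := by
  funext i; simp only [shift, glue, if_neg (show ¬ i + q < r by omega)]
  congr 1; omega

variable {F : (ℕ → A) → β} {d : ℕ}

lemma _root_.DependsOn.apply_glue (hF : DependsOn F (Iio d)) {r : ℕ} (h : d ≤ r)
    (a s : ℕ → A) : F (glue r a s) = F a :=
  hF fun _ hi => if_pos (lt_of_lt_of_le (Set.mem_Iio.mp hi) h)

lemma dependsOn_glue (F : (ℕ → A) → β) (r : ℕ) (s : ℕ → A) :
    DependsOn (fun a => F (glue r a s)) (Iio r) := fun a b h =>
  congrArg F <| funext fun i => by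
    by_cases hi : i < r
    · simp only [glue, if_pos hi]; exact h i hi
    · simp only [glue, if_neg hi]

variable {K : Type*} [Field K]

/-- A function of infinite words that depends only on the first `g` letters models a tensor of
degree `g`; then `σ ↦ x σ * y (shift g σ)` models `x ⊗ y`, and `tpow k g w` models `w^{⊗k}`. -/
def tpow (k g : ℕ) (w : (ℕ → A) → K) (s : ℕ → A) : K :=
  ∏ i ∈ Finset.range k, w (shift (i * g) s)

variable {w : (ℕ → A) → K} {g : ℕ}

@[simp] lemma tpow_zero (g : ℕ) (w : (ℕ → A) → K) (s : ℕ → A) : tpow 0 g w s = 1 := by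
  simp [tpow]

@[simp] lemma tpow_one (g : ℕ) (w : (ℕ → A) → K) (s : ℕ → A) : tpow 1 g w s = w s := by
  simp [tpow]

lemma tpow_add (k₁ k₂ g : ℕ) (w : (ℕ → A) → K) (s : ℕ → A) :
    tpow (k₁ + k₂) g w s = tpow k₁ g w s * tpow k₂ g w (shift (k₁ * g) s) := by
  simp only [tpow, Finset.prod_range_add, shift_shift, add_mul, add_comm]

lemma tpow_eq_mul_tpow_shift {k : ℕ} (hk : 1 ≤ k) (g : ℕ) (w : (ℕ → A) → K) (s : ℕ → A) :
    tpow k g w s = w s * tpow (k - 1) g w (shift g s) := by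
  have h := tpow_add 1 (k - 1) g w s
  rwa [one_mul, tpow_one, Nat.add_sub_cancel' hk] at h

lemma tpow_const_mul (k g : ℕ) (c : K) (w : (ℕ → A) → K) (s : ℕ → A) :
    tpow k g (fun t => c * w t) s = c ^ k * tpow k g w s := by
  simp [tpow, Finset.prod_mul_distrib]

lemma exists_tpow_ne_zero (hw : DependsOn w (Iio g)) {a : ℕ → A} (ha : w a ≠ 0) (k : ℕ) :
    ∃ s, tpow k g w s ≠ 0 := by
  induction k with
  | zero => exact ⟨a, by simp⟩
  | succ k ih =>
    obtain ⟨s, hs⟩ := ih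
    refine ⟨glue g a s, ?_⟩
    rw [tpow_eq_mul_tpow_shift (by omega), hw.apply_glue le_rfl, shift_glue, Nat.add_sub_cancel]
    exact mul_ne_zero ha hs

variable {x y : (ℕ → A) → K} {r s : ℕ}

lemma exists_eq_const_mul_of_mul_shift_eq {X Y : (ℕ → A) → K}
    (hx : DependsOn x (Iio r)) (hy : DependsOn y (Iio r))
    (heq : ∀ σ, x σ * X (shift r σ) = y σ * Y (shift r σ)) {σ₀ : ℕ → A}
    (hne : x σ₀ * X (shift r σ₀) ≠ 0) :
    ∃ γ : K, ∀ σ, x σ = γ * y σ := by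
  set τ := shift r σ₀
  have hXτ : X τ ≠ 0 := right_ne_zero_of_mul hne
  refine ⟨Y τ / X τ, fun σ => ?_⟩
  have h := heq (glue r σ τ)
  rw [shift_glue, hx.apply_glue le_rfl, hy.apply_glue le_rfl] at h
  field_simp
  linear_combination h

lemma exists_eq_mul_of_comm (hrs : r ≤ s) (hx : DependsOn x (Iio r))
    (hy : DependsOn y (Iio s)) {c : K}
    (hxy : ∀ σ, x σ * y (shift r σ) = c * (y σ * x (shift s σ)))
    {σ₀ : ℕ → A} (hne : x σ₀ * y (shift r σ₀) ≠ 0) :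
    ∃ y' : (ℕ → A) → K, DependsOn y' (Iio (s - r)) ∧ (∀ σ, y σ = x σ * y' (shift r σ)) ∧
      (∀ σ, x σ * y' (shift r σ) = c * (y' σ * x (shift (s - r) σ))) ∧
      x (shift r σ₀) * y' (shift r (shift r σ₀)) ≠ 0 := by
  have hxσ₀ : x σ₀ ≠ 0 := left_ne_zero_of_mul hne
  have hc : c ≠ 0 := by
    rintro rfl
    exact hne (by rw [hxy, zero_mul])
  set y' := fun t => y (glue (s - r) t σ₀) / (c * x σ₀)
  have hy' : ∀ σ, y σ = x σ * y' (shift r σ) := by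
    intro σ
    have h := hxy (glue s σ σ₀)
    rw [hx.apply_glue hrs, hy.apply_glue le_rfl, shift_glue, shift_glue_of_le hrs] at h
    simp only [y']
    field_simp
    linear_combination -h
  refine ⟨y', fun t t' h => ?_, hy', fun σ => ?_, ?_⟩
  · exact congrArg (· / (c * x σ₀)) (dependsOn_glue y (s - r) σ₀ h)
  · have h := hxy (glue r σ₀ σ)
    rw [hy' (glue r σ₀ σ), shift_glue, hx.apply_glue le_rfl, shift_glue_of_ge hrs, hy' σ] at h
    exact mul_left_cancel₀ hxσ₀ (by linear_combination h)
  · rw [hy'] at hne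
    exact right_ne_zero_of_mul hne

/-- Tensor analogue of the Lyndon–Schützenberger theorem on commuting words. -/
theorem exists_tpow_of_comm (hr : 0 < r) (hs : 0 < s) (hx : DependsOn x (Iio r))
    (hy : DependsOn y (Iio s)) {c : K}
    (hxy : ∀ σ, x σ * y (shift r σ) = c * (y σ * x (shift s σ)))
    {σ₀ : ℕ → A} (hne : x σ₀ * y (shift r σ₀) ≠ 0) :
    ∃ (w : (ℕ → A) → K) (a b : K), DependsOn w (Iio (r.gcd s)) ∧
      (∀ σ, x σ = a * tpow (r / r.gcd s) (r.gcd s) w σ) ∧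
      (∀ σ, y σ = b * tpow (s / r.gcd s) (r.gcd s) w σ) := by
  induction hN : r + s using Nat.strong_induction_on generalizing r s x y c σ₀ with
  | _ N ih =>
  wlog hrs : r ≤ s generalizing r s x y c σ₀
  · have hc : c ≠ 0 := by
      rintro rfl
      exact hne (by rw [hxy, zero_mul])
    have hyx : ∀ σ, y σ * x (shift s σ) = c⁻¹ * (x σ * y (shift r σ)) := fun σ => by
      rw [hxy, inv_mul_cancel_left₀ hc]
    have hne' : y σ₀ * x (shift s σ₀) ≠ 0 := by
      rw [hyx]
      exact mul_ne_zero (inv_ne_zero hc) hne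
    obtain ⟨w, b, a, hw, hyw, hxw⟩ :=
      this hs hr hy hx hyx hne' (by omega) (by omega)
    rw [Nat.gcd_comm] at hw hyw hxw
    exact ⟨w, a, b, hw, hxw, hyw⟩
  obtain ⟨y', hy', hyy', hxy', hne'⟩ := exists_eq_mul_of_comm hrs hx hy hxy hne
  rcases hrs.eq_or_lt with rfl | hlt
  · have hy'_const : ∀ σ, y' σ = y' σ₀ := fun σ =>
      hy' fun i hi => absurd (Set.mem_Iio.mp hi) (by omega)
    refine ⟨x, 1, y' σ₀, by rwa [Nat.gcd_self], fun σ => ?_, fun σ => ?_⟩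
    · simp [Nat.div_self hr]
    · simp [hyy', hy'_const, Nat.div_self hr, mul_comm]
  · obtain ⟨w, a, b, hw, hxw, hyw⟩ := ih s (by omega) hr (by omega) hx hy' hxy' hne' (by omega)
    rw [Nat.gcd_sub_self_right hrs] at hw hxw hyw
    have hsplit : s / r.gcd s = r / r.gcd s + (s - r) / r.gcd s := by
      rw [← Nat.add_div_of_dvd_right (Nat.gcd_dvd_left r s), Nat.add_sub_cancel' hrs]
    refine ⟨w, a, a * b, hw, hxw, fun σ => ?_⟩
    rw [hyy', hxw, hyw, hsplit, tpow_add, Nat.div_mul_cancel (Nat.gcd_dvd_left r s)]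
    ring

lemma dependsOn_mul_shift (hx : DependsOn x (Iio r)) (hy : DependsOn y (Iio s)) :
    DependsOn (fun σ => x σ * y (shift r σ)) (Iio (r + s)) := fun σ τ h => by
  simp only [Set.mem_Iio] at h
  have hxστ : x σ = x τ := hx fun i hi => h i (by simp at hi; omega)
  have hyστ : y (shift r σ) = y (shift r τ) := hy fun i hi => h (i + r) (by simp at hi; omega)
  simp only [hxστ, hyστ]

lemma exists_tpow_add_self_eq {m m' α p : ℕ} (hα : 1 ≤ α) (hp : 1 ≤ p) (hd : α * m = p * m')
    {c : K} (heq : ∀ σ, tpow α m x σ = c * tpow p m' y σ) :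
    ∃ X : (ℕ → A) → K,
      ∀ σ, tpow (α + α) m x σ = c * (x σ * y (shift m σ)) * X (shift (m' + m) σ) := by
  refine ⟨fun τ => tpow (p - 1) m' y τ * tpow (α - 1) m x (shift ((p - 1) * m') τ), fun σ => ?_⟩
  have hshift : (p - 1) * m' + (m' + m) = α * m + m := by
    rw [hd, ← add_assoc, ← Nat.succ_mul, Nat.succ_eq_add_one, Nat.sub_add_cancel hp]
  rw [show α + α = 1 + (α + (α - 1)) by omega, tpow_add, tpow_one, one_mul, tpow_add,
    shift_shift, heq, tpow_eq_mul_tpow_shift hp, shift_shift]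
  simp only [shift_shift, hshift]
  ring

/-- `x^{⊗2α}` is proportional both to `x ⊗ y ⊗ X` and to `y ⊗ x ⊗ Y`. -/
lemma exists_comm_of_tpow_eq {m m' α p : ℕ} (hα : 1 ≤ α) (hp : 1 ≤ p) (hd : α * m = p * m')
    (hx : DependsOn x (Iio m)) (hy : DependsOn y (Iio m')) {c : K}
    (heq : ∀ σ, tpow α m x σ = c * tpow p m' y σ) {σ₀ : ℕ → A} (hσ₀ : x σ₀ ≠ 0) :
    ∃ (γ : K) (σ₁ : ℕ → A), (∀ σ, x σ * y (shift m σ) = γ * (y σ * x (shift m' σ))) ∧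
      x σ₁ * y (shift m σ₁) ≠ 0 := by
  obtain ⟨σ₁, hσ₁⟩ := exists_tpow_ne_zero hx hσ₀ (α + α)
  obtain ⟨X, hX⟩ := exists_tpow_add_self_eq hα hp hd heq
  have hc : c ≠ 0 := by
    rintro rfl
    exact hσ₁ (by rw [hX, zero_mul, zero_mul])
  obtain ⟨Y, hY⟩ := exists_tpow_add_self_eq (x := y) (y := x) hp hα hd.symm (c := c⁻¹)
    fun σ => by rw [heq, inv_mul_cancel_left₀ hc]
  have hsq : ∀ σ, tpow (α + α) m x σ = c ^ 2 * tpow (p + p) m' y σ := fun σ => by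
    rw [tpow_add, tpow_add, heq, heq, hd]
    ring
  have hcut : ∀ σ, (x σ * y (shift m σ)) * X (shift (m' + m) σ) =
      (y σ * x (shift m' σ)) * Y (shift (m' + m) σ) := fun σ => by
    have h := hsq σ
    rw [hX, hY, add_comm m m'] at h
    field_simp at h
    exact h
  have hne : (x σ₁ * y (shift m σ₁)) * X (shift (m' + m) σ₁) ≠ 0 := by
    rw [hX] at hσ₁
    exact right_ne_zero_of_mul (by simpa [mul_assoc] using hσ₁)
  obtain ⟨γ, hγ⟩ := exists_eq_const_mul_of_mul_shift_eq
    (by rw [add_comm]; exact dependsOn_mul_shift hx hy) (dependsOn_mul_shift hy hx) hcut hne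
  exact ⟨γ, σ₁, hγ, left_ne_zero_of_mul hne⟩

variable {B C : Type*}

def zipSeq (π : A → B → C) (a : ℕ → A) (b : ℕ → B) : ℕ → C := fun i => π (a i) (b i)

lemma shift_zipSeq (π : A → B → C) (r : ℕ) (a : ℕ → A) (b : ℕ → B) :
    shift r (zipSeq π a b) = zipSeq π (shift r a) (shift r b) := rfl

lemma glue_zipSeq (π : A → B → C) (r : ℕ) (a a' : ℕ → A) (b b' : ℕ → B) :
    glue r (zipSeq π a b) (zipSeq π a' b') = zipSeq π (glue r a a') (glue r b b') := by
  funext i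
  simp only [glue, zipSeq]
  split_ifs <;> rfl

/-- Freezing all letters after the first `r` at `(a₀, b₀)` splits `X (zipSeq π a b)` as
`u a * v b`. -/
lemma exists_tpow_of_tpow_zipSeq_eq {π : A → B → C} {X : (ℕ → C) → K} {F : (ℕ → A) → K}
    {G : (ℕ → B) → K} {p : ℕ} (hp : 1 ≤ p) (hX : DependsOn X (Iio r))
    (heq : ∀ a b, tpow p r X (zipSeq π a b) = F a * G b) {a₀ : ℕ → A} {b₀ : ℕ → B}
    (hne : F a₀ * G b₀ ≠ 0) :
    ∃ (u : (ℕ → A) → K) (v : (ℕ → B) → K) (c c' : K), DependsOn u (Iio r) ∧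
      DependsOn v (Iio r) ∧ (∀ a, F a = c * tpow p r u a) ∧ (∀ b, G b = c' * tpow p r v b) := by
  set P := tpow (p - 1) r X (zipSeq π (shift r a₀) (shift r b₀))
  have hP : P ≠ 0 := by
    rw [← heq, tpow_eq_mul_tpow_shift hp, shift_zipSeq] at hne
    exact right_ne_zero_of_mul hne
  set u := fun a => F (glue r a (shift r a₀))
  set v := fun b => G (glue r b (shift r b₀)) / P
  have hsplit : ∀ a b, X (zipSeq π a b) = u a * v b := fun a b => by
    have h := heq (glue r a (shift r a₀)) (glue r b (shift r b₀))
    rw [← glue_zipSeq, tpow_eq_mul_tpow_shift hp, hX.apply_glue le_rfl, shift_glue] at h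
    simp only [u, v]
    field_simp
    linear_combination h
  have hpow : ∀ a b, tpow p r X (zipSeq π a b) = tpow p r u a * tpow p r v b := fun a b => by
    simp only [tpow, ← Finset.prod_mul_distrib]
    exact Finset.prod_congr rfl fun i _ => hsplit _ _
  have hF₀ : F a₀ ≠ 0 := left_ne_zero_of_mul hne
  have hG₀ : G b₀ ≠ 0 := right_ne_zero_of_mul hne
  refine ⟨u, v, tpow p r v b₀ / G b₀, tpow p r u a₀ / F a₀, dependsOn_glue F r _,
    fun b b' h => congrArg (· / P) (dependsOn_glue G r _ h), fun a => ?_, fun b => ?_⟩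
  · have h := heq a b₀
    rw [hpow] at h
    field_simp
    linear_combination -h
  · have h := heq a₀ b
    rw [hpow] at h
    field_simp
    linear_combination -h

end Sequences

section Tensors

variable {n m : ℕ}

def seqFun (z : Vnm n m) : (ℕ → Fin n) → ℂ := fun s => z fun i => s i

def extend (hn : 0 < n) (J : Fin m → Fin n) : ℕ → Fin n :=
  fun i => if h : i < m then J ⟨i, h⟩ else ⟨0, hn⟩

@[simp] lemma seqFun_extend (hn : 0 < n) (z : Vnm n m) (J : Fin m → Fin n) :
    seqFun z (extend hn J) = z J := by
  simp [seqFun, extend]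

lemma dependsOn_seqFun (z : Vnm n m) : DependsOn (seqFun z) (Iio m) := fun _ _ h =>
  congrArg z (funext fun i => h i i.isLt)

lemma seqFun_injective (hn : 0 < n) : Function.Injective (seqFun : Vnm n m → _) :=
  fun z z' h => by
    ext J
    rw [← seqFun_extend hn z, ← seqFun_extend hn z', h]

lemma exists_seqFun_ne_zero (hn : 0 < n) {z : Vnm n m} (hz : z ≠ 0) : ∃ s, seqFun z s ≠ 0 := by
  obtain ⟨J, hJ⟩ : ∃ J, z J ≠ 0 := by
    by_contra! h
    exact hz (by ext J; exact h J)
  exact ⟨extend hn J, by rwa [seqFun_extend]⟩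

lemma seqFun_castV_tpowV {m' p : ℕ} (h : p * m' = m) (x : Vnm n m') (s : ℕ → Fin n) :
    seqFun (castV h (tpowV x p)) s = tpow p m' (seqFun x) s := by
  rw [tpow, Finset.prod_range]
  simp only [seqFun, castV, tpowV]
  refine Finset.prod_congr rfl fun i _ => congrArg x (funext fun t => ?_)
  simp [shift, add_comm]

lemma seqFun_boxTensV {n' : ℕ} (Z : Vnm n m) (Y : Vnm n' m) (a : ℕ → Fin n) (b : ℕ → Fin n') :
    seqFun (boxTensV Z Y) (zipSeq (fun i j => finProdFinEquiv (i, j)) a b) =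
      seqFun Z a * seqFun Y b :=
  congrArg₂ (· * ·)
    (congrArg Z (funext fun t => congrArg Prod.fst (finProdFinEquiv.symm_apply_apply (a t, b t))))
    (congrArg Y (funext fun t => congrArg Prod.snd (finProdFinEquiv.symm_apply_apply (a t, b t))))

lemma norm_castV {m' : ℕ} (h : m = m') (z : Vnm n m) : ‖castV h z‖ = ‖z‖ := by
  subst h
  rfl

lemma norm_tpowV (x : Vnm n m) (p : ℕ) : ‖tpowV x p‖ = ‖x‖ ^ p := by
  let e : (Fin (p * m) → Fin n) ≃ (Fin p → Fin m → Fin n) :=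
    (Equiv.arrowCongr finProdFinEquiv.symm (Equiv.refl _)).trans (Equiv.curry _ _ _)
  have he : ∀ J, tpowV x p J = ∏ i, x (e J i) := fun J => by
    simp only [tpowV, PiLp.toLp_apply]
    refine Finset.prod_congr rfl fun i _ => congrArg x (funext fun t => ?_)
    simp [e, finProdFinEquiv, add_comm, mul_comm]
  have hsq : ‖tpowV x p‖ ^ 2 = (‖x‖ ^ p) ^ 2 := calc
    ‖tpowV x p‖ ^ 2 = ∑ J, ∏ i, ‖x (e J i)‖ ^ 2 := by
      simp only [EuclideanSpace.norm_sq_eq, he, norm_prod, Finset.prod_pow]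
    _ = ∑ h : Fin p → Fin m → Fin n, ∏ i, ‖x (h i)‖ ^ 2 := e.sum_comp fun h => ∏ i, ‖x (h i)‖ ^ 2
    _ = (‖x‖ ^ p) ^ 2 := by
      rw [← pow_mul, mul_comm, pow_mul, EuclideanSpace.norm_sq_eq, Fintype.sum_pow]
  exact (sq_eq_sq₀ (norm_nonneg _) (by positivity)).mp hsq

lemma norm_boxTensV {n' : ℕ} (Z : Vnm n m) (Y : Vnm n' m) : ‖boxTensV Z Y‖ = ‖Z‖ * ‖Y‖ := by
  let e : (Fin m → Fin (n * n')) ≃ (Fin m → Fin n) × (Fin m → Fin n') :=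
    (Equiv.arrowCongr (Equiv.refl _) finProdFinEquiv.symm).trans
      (Equiv.arrowProdEquivProdArrow _ _ _)
  have hsq : ‖boxTensV Z Y‖ ^ 2 = (‖Z‖ * ‖Y‖) ^ 2 := calc
    ‖boxTensV Z Y‖ ^ 2 = ∑ L, ‖Z (e L).1‖ ^ 2 * ‖Y (e L).2‖ ^ 2 := by
      simp only [EuclideanSpace.norm_sq_eq, ← mul_pow, ← norm_mul]
      rfl
    _ = ∑ P : (Fin m → Fin n) × (Fin m → Fin n'), ‖Z P.1‖ ^ 2 * ‖Y P.2‖ ^ 2 :=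
      e.sum_comp fun P => ‖Z P.1‖ ^ 2 * ‖Y P.2‖ ^ 2
    _ = (‖Z‖ * ‖Y‖) ^ 2 := by
      rw [Fintype.sum_prod_type, mul_pow, EuclideanSpace.norm_sq_eq, EuclideanSpace.norm_sq_eq,
        Finset.sum_mul_sum]
  exact (sq_eq_sq₀ (norm_nonneg _) (by positivity)).mp hsq

lemma norm_starV {n' l : ℕ} (z : Vnm n m) (y : Vnm n' l) :
    ‖starV z y‖ = ‖z‖ ^ (m.lcm l / m) * ‖y‖ ^ (m.lcm l / l) := by
  rw [starV, norm_boxTensV, norm_castV, norm_castV, norm_tpowV, norm_tpowV]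

lemma periodicV_of_seqFun_eq_mul_tpow (hn : 0 < n) {z : Vnm n m} (hz : ‖z‖ = 1) {g k : ℕ}
    (hk : 2 ≤ k) (hkg : k * g = m) {w : (ℕ → Fin n) → ℂ} (hw : DependsOn w (Iio g)) {a : ℂ}
    (heq : ∀ σ, seqFun z σ = a * tpow k g w σ) : PeriodicV z := by
  obtain ⟨δ, hδ⟩ := IsAlgClosed.exists_pow_nat_eq a (by omega : 0 < k)
  let x : Vnm n g := WithLp.toLp 2 fun K => δ * w (extend hn K)
  have hx : ∀ σ, seqFun x σ = δ * w σ := fun σ =>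
    congrArg (δ * ·) (hw fun i hi => by simp [extend, Set.mem_Iio.mp hi])
  have hpow : castV hkg (tpowV x k) = z := seqFun_injective hn <| funext fun σ => by
    simp only [seqFun_castV_tpowV, heq, ← hδ, ← tpow_const_mul]
    exact Finset.prod_congr rfl fun i _ => hx _
  have hx1 : ‖x‖ ^ k = 1 := by rw [← norm_tpowV, ← norm_castV hkg, hpow, hz]
  exact ⟨g, k, x, hkg, (pow_eq_one_iff_of_nonneg (norm_nonneg x) (by omega)).mp hx1, hk, hpow⟩

lemma dvd_of_tpow_seqFun_eq (hn : 0 < n) (hm : 0 < m) {z : Vnm n m} (hz : ‖z‖ = 1)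
    (hznp : ¬ PeriodicV z) {m' α p : ℕ} (hα : 1 ≤ α) (hp : 1 ≤ p) (hd : α * m = p * m')
    {u : (ℕ → Fin n) → ℂ} (hu : DependsOn u (Iio m')) {c : ℂ}
    (heq : ∀ σ, tpow α m (seqFun z) σ = c * tpow p m' u σ) : m ∣ m' := by
  have hm' : 0 < m' := Nat.pos_of_mul_pos_left (hd ▸ Nat.mul_pos (by omega) hm)
  obtain ⟨σ₀, hσ₀⟩ := exists_seqFun_ne_zero hn (norm_ne_zero_iff.mp (hz ▸ one_ne_zero))
  obtain ⟨γ, σ₁, hcomm, hne⟩ :=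
    exists_comm_of_tpow_eq hα hp hd (dependsOn_seqFun z) hu heq hσ₀
  obtain ⟨w, a, -, hw, hzw, -⟩ :=
    exists_tpow_of_comm hm hm' (dependsOn_seqFun z) hu hcomm hne
  by_contra hdvd
  have hkg : m / m.gcd m' * m.gcd m' = m := Nat.div_mul_cancel (Nat.gcd_dvd_left m m')
  have hk : 2 ≤ m / m.gcd m' := by
    have h0 : m / m.gcd m' ≠ 0 :=
      (Nat.div_pos (Nat.gcd_le_left m' hm) (Nat.gcd_pos_of_pos_left m' hm)).ne'
    have h1 : m / m.gcd m' ≠ 1 := fun h => hdvd <| by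
      rw [h, one_mul] at hkg
      exact hkg ▸ Nat.gcd_dvd_right m m'
    exact Nat.two_le_iff _ |>.mpr ⟨h0, h1⟩
  exact hznp (periodicV_of_seqFun_eq_mul_tpow hn hz hk hkg hw hzw)

theorem not_periodicV_starV {n' l : ℕ} (hn : 0 < n) (hn' : 0 < n') (hm : 0 < m) (hl : 0 < l)
    {z : Vnm n m} {y : Vnm n' l} (hz : ‖z‖ = 1) (hy : ‖y‖ = 1) (hznp : ¬ PeriodicV z)
    (hynp : ¬ PeriodicV y) : ¬ PeriodicV (starV z y) := by
  rintro ⟨m', p, x, hpm, -, hp, hx⟩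
  have hd : 0 < m.lcm l := Nat.lcm_pos hm hl
  have hα : m.lcm l / m * m = m.lcm l := Nat.div_mul_cancel (Nat.dvd_lcm_left m l)
  have hβ : m.lcm l / l * l = m.lcm l := Nat.div_mul_cancel (Nat.dvd_lcm_right m l)
  have heq : ∀ a b, tpow p m' (seqFun x) (zipSeq (fun i j => finProdFinEquiv (i, j)) a b) =
      tpow (m.lcm l / m) m (seqFun z) a * tpow (m.lcm l / l) l (seqFun y) b := fun a b => by
    rw [← seqFun_castV_tpowV hpm, hx, ← seqFun_castV_tpowV hα, ← seqFun_castV_tpowV hβ]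
    exact seqFun_boxTensV _ _ a b
  obtain ⟨a₀, ha₀⟩ := exists_seqFun_ne_zero hn (norm_ne_zero_iff.mp (hz ▸ one_ne_zero))
  obtain ⟨b₀, hb₀⟩ := exists_seqFun_ne_zero hn' (norm_ne_zero_iff.mp (hy ▸ one_ne_zero))
  obtain ⟨a₁, ha₁⟩ := exists_tpow_ne_zero (dependsOn_seqFun z) ha₀ (m.lcm l / m)
  obtain ⟨b₁, hb₁⟩ := exists_tpow_ne_zero (dependsOn_seqFun y) hb₀ (m.lcm l / l)
  obtain ⟨u, v, c, c', hu, hv, hzu, hyv⟩ :=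
    exists_tpow_of_tpow_zipSeq_eq (by omega) (dependsOn_seqFun x) heq (mul_ne_zero ha₁ hb₁)
  have hm' : m ∣ m' := dvd_of_tpow_seqFun_eq hn hm hz hznp
    (Nat.div_pos (Nat.le_of_dvd hd (Nat.dvd_lcm_left m l)) hm) (by omega) (hα.trans hpm.symm)
    hu hzu
  have hl' : l ∣ m' := dvd_of_tpow_seqFun_eq hn' hl hy hynp
    (Nat.div_pos (Nat.le_of_dvd hd (Nat.dvd_lcm_right m l)) hl) (by omega) (hβ.trans hpm.symm)
    hv hyv
  have hle : m.lcm l ≤ m' :=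
    Nat.le_of_dvd (Nat.pos_of_mul_pos_left (hpm ▸ hd)) (Nat.lcm_dvd hm' hl')
  have h2 : 2 * m' ≤ p * m' := Nat.mul_le_mul_right m' hp
  omega

end Tensors

end SubCuntz

/-- if `z ∈ V_{n,m}` and `y ∈ V_{n',l}` are nonperiodic unit vectors,
then `z * y ∈ V_{nn',lcm(m,l)}` is a nonperiodic unit vector. -/
theorem subCuntz_stmt10 {n n' m l : ℕ} (hn : 2 ≤ n) (hn' : 2 ≤ n')
    (hm : 1 ≤ m) (hl : 1 ≤ l)
    (z : Vnm n m) (y : Vnm n' l) (hz : ‖z‖ = 1) (hy : ‖y‖ = 1)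
    (hznp : ¬ PeriodicV z) (hynp : ¬ PeriodicV y) :
    ‖starV z y‖ = 1 ∧ ¬ PeriodicV (starV z y) :=
  ⟨by rw [SubCuntz.norm_starV, hz, hy, one_pow, one_pow, mul_one],
    SubCuntz.not_periodicV_starV (by omega) (by omega) hm hl hz hy hznp hynp⟩
end
end

section
/- Let n ≥ 2, let S₁,…,Sₙ be a Cuntz family of order n on a complex Hilbert space H, let m ≥ 1, let z = Σ_J z_J e_J be a unit vector in V_{n,m}, and let Ω ∈ H be a unit vector. Then s(z)Ω = Ω if and only if S_J* Ω = z_J Ω for every J ∈ {1,…,n}^m. -/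
noncomputable section

/-!
The first Cuntz relation makes the vectors `S_J Ω`, `|J| = m`, orthonormal, and `s(z)Ω` is their
combination with coefficients `z_J`. Hence `S_J* s(z) Ω = z_J Ω`, which gives one direction. For the
other, `s(z)Ω` is then a unit vector with `⟪s(z)Ω, Ω⟫ = Σ conj z_J · z_J = ‖z‖² = 1`, and the equality
case of Cauchy–Schwarz forces `s(z)Ω = Ω`.
-/

open scoped InnerProduct InnerProductSpace

section Orthonormal

variable {𝕜 E ι : Type*} [RCLike 𝕜] [NormedAddCommGroup E] [InnerProductSpace 𝕜 E] [Fintype ι]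
  {v : ι → E}

theorem Orthonormal.norm_sum_smul (hv : Orthonormal 𝕜 v) (x : EuclideanSpace 𝕜 ι) :
    ‖∑ i, x i • v i‖ = ‖x‖ := by
  have h : ((‖∑ i, x i • v i‖ ^ 2 : ℝ) : 𝕜) = ((‖x‖ ^ 2 : ℝ) : 𝕜) := by
    push_cast
    rw [← inner_self_eq_norm_sq_to_K (𝕜 := 𝕜), ← inner_self_eq_norm_sq_to_K (𝕜 := 𝕜),
      hv.inner_sum, PiLp.inner_apply]
    simp only [RCLike.inner_apply, mul_comm]
  exact (pow_left_inj₀ (norm_nonneg _) (norm_nonneg _) two_ne_zero).mp (RCLike.ofReal_inj.mp h)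

theorem Orthonormal.sum_smul_eq_of_inner_eq (hv : Orthonormal 𝕜 v) {x : EuclideanSpace 𝕜 ι}
    (hx : ‖x‖ = 1) {y : E} (hy : ‖y‖ = 1) (h : ∀ i, ⟪v i, y⟫_𝕜 = x i) :
    ∑ i, x i • v i = y := by
  refine (inner_eq_one_iff_of_norm_eq_one (𝕜 := 𝕜) (hv.norm_sum_smul x ▸ hx) hy).mp ?_
  calc ⟪∑ i, x i • v i, y⟫_𝕜 = ⟪x, x⟫_𝕜 := by
        simp only [sum_inner, inner_smul_left, h, PiLp.inner_apply, RCLike.inner_apply, mul_comm]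
    _ = 1 := inner_self_eq_one_of_norm_eq_one hx

end Orthonormal

section Cuntz

variable {H : Type*} [NormedAddCommGroup H] [InnerProductSpace ℂ H]

theorem sop_apply {n m : ℕ} {S : Fin n → H →L[ℂ] H} (z : Vnm n m) (Ω : H) :
    sop S z Ω = ∑ J, z J • Sword S m J Ω := by
  simp [sop]

variable [CompleteSpace H] {ι : Type*} [DecidableEq ι] {S : ι → H →L[ℂ] H}

theorem adjoint_Sword_comp_Sword (hS : ∀ i j, (S i)† ∘L S j = if i = j then 1 else 0) :
    ∀ (m : ℕ) (J K : Fin m → ι), (Sword S m J)† ∘L Sword S m K = if J = K then 1 else 0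
  | 0, J, K => by
    simp [Sword, Subsingleton.elim J K, ContinuousLinearMap.one_def, ContinuousLinearMap.adjoint_id]
  | m + 1, J, K => by
    have hJK : J = K ↔ J 0 = K 0 ∧ Fin.tail J = Fin.tail K := by
      rw [← Fin.cons_self_tail J, ← Fin.cons_self_tail K, Fin.cons_inj]; simp
    simp only [Sword, ContinuousLinearMap.adjoint_comp]
    calc (Sword S m (Fin.tail J))† ∘L (S (J 0))† ∘L S (K 0) ∘L Sword S m (Fin.tail K)
        = (Sword S m (Fin.tail J))† ∘L ((S (J 0))† ∘L S (K 0)) ∘L Sword S m (Fin.tail K) := by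
          simp only [ContinuousLinearMap.comp_assoc]
      _ = if J = K then 1 else 0 := by
          by_cases h0 : J 0 = K 0
          · simp only [hS, h0, if_true, ContinuousLinearMap.one_def, ContinuousLinearMap.id_comp,
              adjoint_Sword_comp_Sword hS m, hJK, true_and]
          · simp only [hS, h0, if_false, ContinuousLinearMap.zero_comp,
              ContinuousLinearMap.comp_zero, hJK, false_and]

theorem adjoint_Sword_Sword_apply (hS : ∀ i j, (S i)† ∘L S j = if i = j then 1 else 0) (m : ℕ)
    (J K : Fin m → ι) (x : H) : ((Sword S m J)†) (Sword S m K x) = if J = K then x else 0 := by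
  rw [← ContinuousLinearMap.comp_apply, adjoint_Sword_comp_Sword hS]
  split_ifs <;> rfl

theorem orthonormal_Sword_apply (hS : ∀ i j, (S i)† ∘L S j = if i = j then 1 else 0) (m : ℕ)
    {Ω : H} (hΩ : ‖Ω‖ = 1) : Orthonormal ℂ fun J : Fin m → ι => Sword S m J Ω := by
  refine orthonormal_iff_ite.mpr fun J K => ?_
  rw [← ContinuousLinearMap.adjoint_inner_right, adjoint_Sword_Sword_apply hS]
  split_ifs <;> simp [hΩ]

theorem adjoint_Sword_sop_apply {n m : ℕ} {S : Fin n → H →L[ℂ] H}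
    (hS : ∀ i j, (S i)† ∘L S j = if i = j then 1 else 0)
    (z : Vnm n m) (Ω : H) (J : Fin m → Fin n) : ((Sword S m J)†) (sop S z Ω) = z J • Ω := by
  simp [sop_apply, adjoint_Sword_Sword_apply hS]

end Cuntz

theorem subCuntz_stmt11_general {H : Type*} [NormedAddCommGroup H] [InnerProductSpace ℂ H]
    [CompleteSpace H] {n m : ℕ}
    (S : Fin n → H →L[ℂ] H) (hS : IsCuntzFamily S)
    (z : Vnm n m) (hz : ‖z‖ = 1) (Ω : H) (hΩ : ‖Ω‖ = 1) :
    sop S z Ω = Ω ↔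
      ∀ J : Fin m → Fin n, ContinuousLinearMap.adjoint (Sword S m J) Ω = z J • Ω := by
  constructor
  · intro h J
    rw [← adjoint_Sword_sop_apply hS.1 z Ω J, h]
  · intro h
    rw [sop_apply]
    refine (orthonormal_Sword_apply hS.1 m hΩ).sum_smul_eq_of_inner_eq hz hΩ fun J => ?_
    rw [← ContinuousLinearMap.adjoint_inner_right, h J, inner_smul_right,
      inner_self_eq_one_of_norm_eq_one hΩ, mul_one]

/-- for a Cuntz family `S` and a unit vector `Ω`,
`s(z)Ω = Ω` iff `S_J* Ω = z_J Ω` for every `J ∈ {1,…,n}^m`. -/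
theorem subCuntz_stmt11 {H : Type*} [NormedAddCommGroup H] [InnerProductSpace ℂ H]
    [CompleteSpace H] {n m : ℕ} (hn : 2 ≤ n) (hm : 1 ≤ m)
    (S : Fin n → H →L[ℂ] H) (hS : IsCuntzFamily S)
    (z : Vnm n m) (hz : ‖z‖ = 1) (Ω : H) (hΩ : ‖Ω‖ = 1) :
    sop S z Ω = Ω ↔
      ∀ J : Fin m → Fin n, ContinuousLinearMap.adjoint (Sword S m J) Ω = z J • Ω :=
  subCuntz_stmt11_general S hS z hz Ω hΩ
end
end
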